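/- Let J = Σ_{l=1}^c J_l with each J_l proper, closed, convex on ℝ^N, let x* be a minimizer of J, let {λ_k} satisfy Σ λ_k = ∞ and Σ λ_k² < ∞, and let {x^{(k+l/c)}} be CPPA iterates starting from x^{(0)}. Assume there is L > 0 such that J_l(x^{(k)}) − J_l(x^{(k+l/c)}) ≤ L ‖x^{(k)} − x^{(k+l/c)}‖ for all l and k. Then for all k ∈ ℕ₀ and all l ∈ {1,…,c}, ‖x^{(k+l/c)} − x*‖ ≤ R, where R = sqrt( ‖x^{(0)} − x*‖² + 2‖λ‖₂² L² c(c+1) ) + 2‖λ‖_∞ c L, with ‖λ‖₂² = Σ_k λ_k² and ‖λ‖_∞ = sup_k λ_k. In particular this applies to the CPPA of the vector-space inpainting functionals with x^{(0)} = E(f) an extension of the data f to the whole grid and L = max(4, L'), where L' bounds ‖E(f) − x^{(k+l/c)}‖_∞ for all iterates. -/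
import Mathlib


open Filter

noncomputable section

lemma combo {E : Type*} [NormedAddCommGroup E] [InnerProductSpace ℝ E]
    (a b : E) (t : ℝ) :
    ‖(1-t)•a + t•b‖^2 = (1-t)*‖a‖^2 + t*‖b‖^2 - t*(1-t)*‖a-b‖^2 := by
  simp only [← real_inner_self_eq_norm_sq, inner_add_left, inner_add_right,
    inner_sub_left, inner_sub_right, inner_smul_left, inner_smul_right,
    RCLike.conj_to_real, real_inner_comm b a]
  ring

lemma prox_ineq {E : Type*} [NormedAddCommGroup E] [InnerProductSpace ℝ E]
    (f : E → ℝ) (hf : ConvexOn ℝ Set.univ f) (lam : ℝ) (hlam : 0 < lam)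
    (x xp : E)
    (hmin : ∀ z, (1/2)*‖x - xp‖^2 + lam * f xp ≤ (1/2)*‖x - z‖^2 + lam * f z)
    (y : E) :
    ‖xp - y‖^2 ≤ ‖x - y‖^2 - ‖x - xp‖^2 + 2*lam*(f y - f xp) := by
  have hA : ‖xp - y‖^2 = ‖y - xp‖^2 := by rw [norm_sub_rev]
  rw [hA]
  have hAnn : (0:ℝ) ≤ ‖y - xp‖^2 := sq_nonneg _
  have main : ∀ t : ℝ, 0 < t → t < 1 →
      (1-t)*‖y - xp‖^2 ≤ ‖x - y‖^2 - ‖x - xp‖^2 + 2*lam*(f y - f xp) := by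
    intro t ht ht1
    have hz := hmin ((1-t)•xp + t•y)
    have hfz : f ((1-t)•xp + t•y) ≤ (1-t) * f xp + t * f y :=
      hf.2 (Set.mem_univ xp) (Set.mem_univ y) (by linarith) (le_of_lt ht) (by ring)
    have hfz' : lam * f ((1-t)•xp + t•y) ≤ lam * ((1-t) * f xp + t * f y) :=
      mul_le_mul_of_nonneg_left hfz hlam.le
    have hxz : x - ((1-t)•xp + t•y) = (1-t)•(x - xp) + t•(x - y) := by
      module
    have hn : ‖x - ((1-t)•xp + t•y)‖^2
        = (1-t)*‖x - xp‖^2 + t*‖x - y‖^2 - t*(1-t)*‖(x-xp)-(x-y)‖^2 := by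
      rw [hxz, combo]
    have hd : (x - xp) - (x - y) = y - xp := by module
    rw [hd] at hn
    rw [hn] at hz
    have key : t*((1-t)*‖y - xp‖^2)
        ≤ t*(‖x - y‖^2 - ‖x - xp‖^2 + 2*lam*(f y - f xp)) := by
      nlinarith [hz, hfz']
    exact le_of_mul_le_mul_left key ht
  by_contra hcon
  push_neg at hcon
  have hB0 : (0:ℝ) ≤ ‖x - y‖^2 - ‖x - xp‖^2 + 2*lam*(f y - f xp) :=
    le_trans (by nlinarith) (main (1/2) (by norm_num) (by norm_num))
  set A := ‖y - xp‖^2 with hAdef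
  set B := ‖x - y‖^2 - ‖x - xp‖^2 + 2*lam*(f y - f xp) with hBdef
  have hApos : 0 < A := lt_of_le_of_lt hB0 hcon
  have hmain := main ((A-B)/(2*A)) (div_pos (by linarith) (by linarith))
    (by rw [div_lt_one (by linarith)]; linarith)
  have e : (1 - (A-B)/(2*A))*A = (A+B)/2 := by field_simp; ring
  rw [e] at hmain
  linarith

lemma sum_aux : ∀ n : ℕ, (∑ i ∈ Finset.range n, ((i:ℝ)+1)) = n*(n+1)/2 := by
  intro n
  induction n with
  | zero => simp
  | succ n ih => rw [Finset.sum_range_succ, ih]; push_cast; ring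


/-- **Lemma 4.3 (boundedness of the CPPA iterates).**
Under the assumptions of the CPPA convergence theorem, with `x*` a minimizer of
`J = Σ_{l=1}^c J_l` and starting value `x^{(0)} = X 0`, all iterates satisfy
`‖x^{(k+l/c)} − x*‖ ≤ R` with
`R = sqrt(‖x^{(0)} − x*‖² + 2‖λ‖₂² L² c(c+1)) + 2‖λ‖_∞ c L`. -/
theorem cppa_iterates_bounded
    (N c : ℕ) (hc : 0 < c)
    (Jl : Fin c → EuclideanSpace ℝ (Fin N) → ℝ)
    (hconv : ∀ l, ConvexOn ℝ Set.univ (Jl l))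
    (hlsc : ∀ l, LowerSemicontinuous (Jl l))
    (J : EuclideanSpace ℝ (Fin N) → ℝ) (hJ : ∀ y, J y = ∑ l, Jl l y)
    (xstar : EuclideanSpace ℝ (Fin N)) (hxstar : ∀ y, J xstar ≤ J y)
    (lam : ℕ → ℝ) (hlampos : ∀ k, 0 < lam k)
    (hlamdiv : ¬ Summable lam)
    (hlamsq : Summable fun k => (lam k) ^ 2)
    (X : ℕ → EuclideanSpace ℝ (Fin N))
    (hX : ∀ (k : ℕ) (l : Fin c), ∀ y,
      (1 / 2) * ‖X (c * k + (l : ℕ)) - X (c * k + (l : ℕ) + 1)‖ ^ 2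
          + lam k * Jl l (X (c * k + (l : ℕ) + 1))
        ≤ (1 / 2) * ‖X (c * k + (l : ℕ)) - y‖ ^ 2 + lam k * Jl l y)
    (L : ℝ) (hL : 0 < L)
    (hLip : ∀ (k : ℕ) (l : Fin c),
      Jl l (X (c * k)) - Jl l (X (c * k + (l : ℕ) + 1))
        ≤ L * ‖X (c * k) - X (c * k + (l : ℕ) + 1)‖) :
    ∀ (k : ℕ) (l : Fin c),
      ‖X (c * k + (l : ℕ) + 1) - xstar‖
        ≤ Real.sqrt (‖X 0 - xstar‖ ^ 2
              + 2 * (∑' k', (lam k') ^ 2) * L ^ 2 * c * (c + 1))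
          + 2 * (⨆ k', lam k') * c * L := by
  -- key prox inequality
  have key : ∀ (k : ℕ) (l : Fin c) (y : EuclideanSpace ℝ (Fin N)),
      ‖X (c*k + (l:ℕ) + 1) - y‖^2 ≤ ‖X (c*k + (l:ℕ)) - y‖^2
        - ‖X (c*k + (l:ℕ)) - X (c*k + (l:ℕ) + 1)‖^2
        + 2 * lam k * (Jl l y - Jl l (X (c*k + (l:ℕ) + 1))) := by
    intro k l y
    exact prox_ineq (Jl l) (hconv l) (lam k) (hlampos k) _ _ (fun z => hX k l z) y
  -- step size bound within a cycle
  have step : ∀ (k : ℕ) (l : ℕ), l ≤ c →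
      ‖X (c*k) - X (c*k + l)‖ ≤ 2 * l * lam k * L := by
    intro k l
    induction l with
    | zero => intro _; simp
    | succ l ih =>
      intro hl1
      have hl : l < c := hl1
      have ihl := ih (le_of_lt hl)
      have hk : ‖X (c*k + l + 1) - X (c*k)‖^2 ≤ ‖X (c*k + l) - X (c*k)‖^2
          - ‖X (c*k + l) - X (c*k + l + 1)‖^2
          + 2 * lam k * (Jl ⟨l,hl⟩ (X (c*k)) - Jl ⟨l,hl⟩ (X (c*k + l + 1))) :=
        key k ⟨l, hl⟩ (X (c*k))
      have hlip : Jl ⟨l,hl⟩ (X (c*k)) - Jl ⟨l,hl⟩ (X (c*k + l + 1))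
          ≤ L * ‖X (c*k) - X (c*k + l + 1)‖ := hLip k ⟨l, hl⟩
      rw [norm_sub_rev (X (c*k + l + 1)) (X (c*k)),
          norm_sub_rev (X (c*k + l)) (X (c*k))] at hk
      have ihsq : ‖X (c*k) - X (c*k + l)‖^2 ≤ (2 * l * lam k * L)^2 :=
        pow_le_pow_left₀ (norm_nonneg _) ihl 2
      have hca : c*k + (l+1) = c*k + l + 1 := by omega
      rw [hca]
      push_cast
      set u := ‖X (c*k) - X (c*k + l + 1)‖ with hu
      by_contra hcon
      push_neg at hcon
      have hun : 0 ≤ u := norm_nonneg _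
      have hlL : 0 < lam k * L := mul_pos (hlampos k) hL
      have hln : (0:ℝ) ≤ (l:ℝ) := Nat.cast_nonneg l
      have h2 : 2*(l:ℝ)*lam k*L < u - 2*lam k*L := by nlinarith
      have hnn1 : (0:ℝ) ≤ 2*((l:ℝ)+1)*lam k*L := by
        have := mul_nonneg (by linarith : (0:ℝ) ≤ (l:ℝ)+1) hlL.le; linarith
      have hnn2 : (0:ℝ) ≤ 2*(l:ℝ)*lam k*L := by
        have := mul_nonneg hln hlL.le; linarith
      have hp : (2*((l:ℝ)+1)*lam k*L) * (2*(l:ℝ)*lam k*L) < u * (u - 2*lam k*L) :=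
        mul_lt_mul'' hcon h2 hnn1 hnn2
      have hlip2 : 2 * lam k * (Jl ⟨l,hl⟩ (X (c*k)) - Jl ⟨l,hl⟩ (X (c*k + l + 1)))
          ≤ 2 * lam k * (L * u) :=
        mul_le_mul_of_nonneg_left hlip (by linarith [hlampos k])
      nlinarith [hk, ihsq, sq_nonneg ‖X (c*k + l) - X (c*k + l + 1)‖,
        mul_nonneg hln (sq_nonneg (lam k * L))]
    -- cycle decrease
  have cyc : ∀ k : ℕ, ‖X (c*(k+1)) - xstar‖^2
      ≤ ‖X (c*k) - xstar‖^2 + 2*(lam k)^2*L^2*c*(c+1) := by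
    intro k
    have Hm : ∀ m : ℕ, m ≤ c → ‖X (c*k + m) - xstar‖^2
        ≤ ‖X (c*k) - xstar‖^2 + 2*lam k * ∑ i ∈ Finset.range m,
          (if h : i < c then Jl ⟨i,h⟩ xstar - Jl ⟨i,h⟩ (X (c*k + i + 1)) else 0) := by
      intro m
      induction m with
      | zero => intro _; simp
      | succ m ih =>
        intro hm1
        have hm : m < c := hm1
        have ihm := ih (le_of_lt hm)
        have hk : ‖X (c*k + m + 1) - xstar‖^2 ≤ ‖X (c*k + m) - xstar‖^2
            - ‖X (c*k + m) - X (c*k + m + 1)‖^2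
            + 2 * lam k * (Jl ⟨m,hm⟩ xstar - Jl ⟨m,hm⟩ (X (c*k + m + 1))) :=
          key k ⟨m, hm⟩ xstar
        rw [Finset.sum_range_succ, dif_pos hm]
        have hca : c*k + (m+1) = c*k + m + 1 := by omega
        rw [hca]
        nlinarith [sq_nonneg ‖X (c*k + m) - X (c*k + m + 1)‖]
    have Hc := Hm c le_rfl
    have hsum : (∑ i ∈ Finset.range c,
          (if h : i < c then Jl ⟨i,h⟩ xstar - Jl ⟨i,h⟩ (X (c*k + i + 1)) else 0))
        = ∑ l : Fin c, (Jl l xstar - Jl l (X (c*k + (l:ℕ) + 1))) := by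
      rw [← Fin.sum_univ_eq_sum_range
        (fun i => if h : i < c then Jl ⟨i,h⟩ xstar - Jl ⟨i,h⟩ (X (c*k + i + 1)) else 0) c]
      exact Finset.sum_congr rfl (fun l _ => by rw [dif_pos l.isLt])
    rw [hsum] at Hc
    have hterm : ∀ l : Fin c, Jl l xstar - Jl l (X (c*k + (l:ℕ) + 1))
        ≤ (Jl l xstar - Jl l (X (c*k))) + L*(2*((l:ℕ)+1:ℝ)*lam k*L) := by
      intro l
      have h1 := hLip k l
      have h2 : ‖X (c*k) - X (c*k + (l:ℕ) + 1)‖ ≤ 2*((l:ℕ)+1:ℝ)*lam k*L := by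
        have hs := step k ((l:ℕ)+1) l.isLt
        have hca : c*k + ((l:ℕ)+1) = c*k + (l:ℕ) + 1 := by omega
        rw [hca] at hs
        push_cast at hs
        linarith
      have h3 : L * ‖X (c*k) - X (c*k + (l:ℕ) + 1)‖ ≤ L*(2*((l:ℕ)+1:ℝ)*lam k*L) :=
        mul_le_mul_of_nonneg_left h2 hL.le
      linarith
    have hsum2 : ∑ l : Fin c, (Jl l xstar - Jl l (X (c*k + (l:ℕ) + 1)))
        ≤ ∑ l : Fin c, ((Jl l xstar - Jl l (X (c*k))) + L*(2*((l:ℕ)+1:ℝ)*lam k*L)) :=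
      Finset.sum_le_sum (fun l _ => hterm l)
    have hsplit : ∑ l : Fin c, ((Jl l xstar - Jl l (X (c*k))) + L*(2*((l:ℕ)+1:ℝ)*lam k*L))
        = (J xstar - J (X (c*k))) + ∑ l : Fin c, (L*(2*((l:ℕ)+1:ℝ)*lam k*L)) := by
      rw [Finset.sum_add_distrib, Finset.sum_sub_distrib, hJ, hJ]
    have hgeo : ∑ l : Fin c, (L*(2*((l:ℕ)+1:ℝ)*lam k*L)) = lam k * L^2 * c * (c+1) := by
      have he : ∀ i : ℕ, L*(2*((i:ℝ)+1)*lam k*L) = (2*lam k*L^2) * ((i:ℝ)+1) :=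
        fun i => by ring
      rw [Fin.sum_univ_eq_sum_range (fun i => L*(2*((i:ℝ)+1)*lam k*L)) c]
      simp_rw [he]
      rw [← Finset.mul_sum, sum_aux c]
      ring
    have hmin0 : J xstar - J (X (c*k)) ≤ 0 := by linarith [hxstar (X (c*k))]
    have hS : ∑ l : Fin c, (Jl l xstar - Jl l (X (c*k + (l:ℕ) + 1)))
        ≤ lam k * L^2 * c * (c+1) := by
      rw [hsplit, hgeo] at hsum2
      linarith
    have hfin : 2 * lam k * (∑ l : Fin c, (Jl l xstar - Jl l (X (c*k + (l:ℕ) + 1))))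
        ≤ 2 * lam k * (lam k * L^2 * c * (c+1)) :=
      mul_le_mul_of_nonneg_left hS (by linarith [hlampos k])
    have hcc : c*k + c = c*(k+1) := by ring
    rw [hcc] at Hc
    nlinarith [Hc, hfin]
  -- global bound on cycle starts
  have part : ∀ k : ℕ, ‖X (c*k) - xstar‖^2
      ≤ ‖X 0 - xstar‖^2 + 2*(∑ j ∈ Finset.range k, (lam j)^2)*L^2*c*(c+1) := by
    intro k
    induction k with
    | zero => simp
    | succ k ih =>
      have hck := cyc k
      rw [Finset.sum_range_succ]
      nlinarith [hck, ih]
  have glob : ∀ k : ℕ, ‖X (c*k) - xstar‖^2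
      ≤ ‖X 0 - xstar‖^2 + 2*(∑' k', (lam k')^2)*L^2*c*(c+1) := by
    intro k
    refine le_trans (part k) ?_
    gcongr
    exact Summable.sum_le_tsum (Finset.range k) (fun i _ => sq_nonneg _) hlamsq
  -- bounded above sup
  have hbdd : BddAbove (Set.range lam) := by
    have hsq0 : Tendsto (fun k => (lam k)^2) atTop (nhds 0) := hlamsq.tendsto_atTop_zero
    have h1 : Tendsto (fun k => Real.sqrt ((lam k)^2)) atTop (nhds (Real.sqrt 0)) :=
      (Real.continuous_sqrt.tendsto 0).comp hsq0
    have heq : (fun k => Real.sqrt ((lam k)^2)) = lam :=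
      funext fun k => Real.sqrt_sq (hlampos k).le
    rw [heq, Real.sqrt_zero] at h1
    exact h1.bddAbove_range
  -- final
  intro k l
  have h1 : ‖X (c*k + (l:ℕ) + 1) - xstar‖
      ≤ ‖X (c*k + (l:ℕ) + 1) - X (c*k)‖ + ‖X (c*k) - xstar‖ :=
    norm_sub_le_norm_sub_add_norm_sub _ _ _
  have h2 : ‖X (c*k + (l:ℕ) + 1) - X (c*k)‖ ≤ 2*((l:ℕ)+1:ℝ)*lam k*L := by
    rw [norm_sub_rev]
    have hs := step k ((l:ℕ)+1) l.isLt
    have hca : c*k + ((l:ℕ)+1) = c*k + (l:ℕ) + 1 := by omega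
    rw [hca] at hs
    push_cast at hs
    linarith
  have h3 : ‖X (c*k) - xstar‖ ≤ Real.sqrt (‖X 0 - xstar‖^2
      + 2*(∑' k', (lam k')^2)*L^2*c*(c+1)) := by
    rw [← Real.sqrt_sq (norm_nonneg (X (c*k) - xstar))]
    exact Real.sqrt_le_sqrt (glob k)
  have h4 : lam k ≤ ⨆ k', lam k' := le_ciSup hbdd k
  have hlc : ((l:ℕ)+1:ℝ) ≤ (c:ℝ) := by exact_mod_cast l.isLt
  have h6 : ((l:ℕ)+1:ℝ) * lam k ≤ (c:ℝ) * (⨆ k', lam k') :=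
    mul_le_mul hlc h4 (hlampos k).le (Nat.cast_nonneg c)
  have h5 : 2*((l:ℕ)+1:ℝ)*lam k*L ≤ 2*(⨆ k', lam k')*c*L := by
    have := mul_le_mul_of_nonneg_right h6 (by positivity : (0:ℝ) ≤ 2*L)
    linarith
  linarith
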